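/- arXiv:2002.11230 — 2 statements merged into one kernel-verified Lean document; each statement's English description precedes it below -/
import Mathlib

section
/- Let Γ be a group, K a Γ-graded division ring with support Γ_K, γ₁,…,γₙ ∈ Γ, and R = Mₙ(K)(γ₁,…,γₙ). Then R is a crossed product if and only if the set {γ₁Γ_K, …, γₙΓ_K} equals Γ/Γ_K and every left coset of Γ_K appears the same number of times in the list γ₁Γ_K, …, γₙΓ_K (i.e., for all i,j ∈ {1,…,n}, the number of indices l with γ_lΓ_K = γᵢΓ_K equals the number of indices l with γ_lΓ_K = γⱼΓ_K). -/
open Pointwise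

structure RingGrading (Γ : Type) [Group Γ] (R : Type) [Ring R] where
  component : Γ → AddSubgroup R
  one_mem : (1 : R) ∈ component 1
  mul_mem : ∀ {γ δ : Γ} {a b : R}, a ∈ component γ → b ∈ component δ →
    a * b ∈ component (γ * δ)
  iSup_eq_top : (⨆ γ : Γ, component γ) = ⊤
  independent : iSupIndep component

variable {Γ : Type} [Group Γ] {R : Type} [Ring R]

def matrixComponent (g : RingGrading Γ R) (n : ℕ) (γv : Fin n → Γ) (δ : Γ) :
    AddSubgroup (Matrix (Fin n) (Fin n) R) where
  carrier := {M | ∀ i j, M i j ∈ g.component ((γv i)⁻¹ * δ * γv j)}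
  add_mem' := by
    intro a b ha hb i j
    simpa [Matrix.add_apply] using add_mem (ha i j) (hb i j)
  zero_mem' := by
    intro i j
    simpa using zero_mem (g.component ((γv i)⁻¹ * δ * γv j))
  neg_mem' := by
    intro a ha i j
    simpa [Matrix.neg_apply] using neg_mem (ha i j)

/-- A `Γ`-graded ring (given by its components) is strongly graded if
`R_γ R_δ = R_{γδ}` for all `γ, δ`; since the inclusion `R_γ R_δ ⊆ R_{γδ}` always
holds in a graded ring, this is the nontrivial inclusion. -/
def StronglyGraded {S : Type} [Ring S] (c : Γ → AddSubgroup S) : Prop :=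
  ∀ γ δ : Γ, c (γ * δ) ≤ AddSubgroup.closure ((c γ : Set S) * (c δ : Set S))

/-- A unital graded ring is a crossed product if every component contains an invertible
element. -/
def IsCrossedProduct {S : Type} [Ring S] (c : Γ → AddSubgroup S) : Prop :=
  ∀ γ : Γ, ∃ u : Sˣ, (u : S) ∈ c γ

/-- Graded unit-regular: every `a ∈ R_γ` satisfies `a = a u a` for some unit `u ∈ R_{γ⁻¹}`. -/
def GradedUnitRegular {S : Type} [Ring S] (c : Γ → AddSubgroup S) : Prop :=
  ∀ (γ : Γ) (a : S), a ∈ c γ → ∃ u : Sˣ, (u : S) ∈ c γ⁻¹ ∧ a = a * u * a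

/-- A `Γ`-graded division ring: a graded ring in which every nonzero homogeneous element
is invertible. -/
structure GradedDivRing (Γ : Type) [Group Γ] (K : Type) [Ring K] extends
    RingGrading Γ K where
  isUnit_of_homogeneous : ∀ {γ : Γ} {a : K}, a ∈ component γ → a ≠ 0 → IsUnit a

/-- The support `Γ_R = {γ | R_γ ≠ 0}` of a grading. -/
def RingGrading.support (g : RingGrading Γ R) : Set Γ := {γ : Γ | g.component γ ≠ ⊥}

def IsGradedIso {Γ R S : Type} [AddGroup R] [Mul R] [AddGroup S] [Mul S]
    (cR : Γ → AddSubgroup R) (cS : Γ → AddSubgroup S) : Prop :=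
  ∃ e : R ≃+* S, ∀ (γ : Γ) (x : R), x ∈ cR γ ↔ e x ∈ cS γ

/-- The identity component `R_ε` of the graded matrix ring, as a subring. -/
def matrixIdentitySubring (g : RingGrading Γ R) (n : ℕ) (γv : Fin n → Γ) :
    Subring (Matrix (Fin n) (Fin n) R) where
  carrier := matrixComponent g n γv 1
  add_mem' := add_mem
  zero_mem' := zero_mem _
  neg_mem' := neg_mem
  one_mem' := by
    intro i j
    by_cases h : i = j
    · subst h
      rw [Matrix.one_apply_eq]
      have hh : (γv i)⁻¹ * 1 * γv i = 1 := by group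
      rw [hh]; exact g.one_mem
    · rw [Matrix.one_apply_ne h]
      exact zero_mem _
  mul_mem' := by
    intro a b ha hb i j
    show (a * b) i j ∈ _
    rw [Matrix.mul_apply]
    refine AddSubgroup.sum_mem _ fun k _ => ?_
    have h := g.mul_mem (ha i k) (hb k j)
    have hh : (γv i)⁻¹ * 1 * γv k * ((γv k)⁻¹ * 1 * γv j) = (γv i)⁻¹ * 1 * γv j := by group
    rwa [hh] at h

/-- The degree-`γ` component `A·γ` of the group ring `A[Γ]`. -/
def monoidAlgebraComponent (A : Type) [Ring A] (Γ : Type) [Group Γ] (γ : Γ) :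
    AddSubgroup (MonoidAlgebra A Γ) where
  carrier := {f | ∀ δ : Γ, δ ≠ γ → f.coeff δ = 0}
  add_mem' := by
    intro f h hf hh δ hδ
    show (f + h).coeff δ = 0
    rw [MonoidAlgebra.coeff_add]
    rw [Finsupp.add_apply, hf δ hδ, hh δ hδ, add_zero]
  zero_mem' := fun δ _ => rfl
  neg_mem' := by
    intro f hf δ hδ
    show (-f).coeff δ = 0
    rw [MonoidAlgebra.coeff_neg]
    rw [Finsupp.neg_apply, hf δ hδ, neg_zero]

/-! A unit of `Mₙ(K)(γ₁, …, γₙ)` of degree `δ` has nonzero entries only at positions `(l, m)`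
with `γ_l Γ_K = δ γ_m Γ_K`. Hence its block with rows in the fibre of `l ↦ γ_l Γ_K` over `δ x`
and columns in the fibre over `x` is invertible. Conjugating that block by diagonal matrices of
homogeneous units puts it in degree `ε`, and projecting its inverse onto degree `ε` gives an
invertible matrix over the division ring `K_ε`; so the two fibres have the same size, and as `Γ`
acts transitively on `Γ/Γ_K`, all fibres do. Conversely, if all fibres have the same size, there
is a permutation `σ` with `γ_{σ l} Γ_K = δ⁻¹ γ_l Γ_K`, and the monomial matrix on the graph of `σ`
with homogeneous unit entries is a unit of degree `δ`. -/

namespace Matrix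

theorem card_eq_of_mul_eq_one {D I J : Type} [Ring D] [InvariantBasisNumber D] [Fintype I]
    [Fintype J] [DecidableEq I] [DecidableEq J] {A : Matrix I J D} {B : Matrix J I D}
    (hAB : A * B = 1) (hBA : B * A = 1) : Fintype.card I = Fintype.card J :=
  card_eq_of_linearEquiv D <| .ofLinearMap A.vecMulLinear B.vecMulLinear
    (LinearMap.ext fun v => by simp [vecMul_vecMul, hBA])
    (LinearMap.ext fun v => by simp [vecMul_vecMul, hAB])

theorem submatrix_mul_submatrix_subtype {D l m n o ι : Type} [NonUnitalNonAssocSemiring D]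
    [Fintype ι] {M : Matrix l ι D} {N : Matrix ι n D} (e₁ : m → l) (e₂ : o → n) (p : ι → Prop)
    [DecidablePred p] (h : ∀ i j k, ¬ p k → M (e₁ i) k * N k (e₂ j) = 0) :
    M.submatrix e₁ (Subtype.val : {k // p k} → ι) *
        N.submatrix (Subtype.val : {k // p k} → ι) e₂ =
      (M * N).submatrix e₁ e₂ := by
  ext i j
  rw [Matrix.mul_apply, submatrix_apply, Matrix.mul_apply,
    ← Fintype.sum_subtype_add_sum_subtype p,
    Fintype.sum_eq_zero _ fun k : {k // ¬ p k} => h i j k k.2, add_zero]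
  rfl

theorem isUnit_diagonal_mul_permMatrix {ι R : Type} [Fintype ι] [DecidableEq ι] [Ring R]
    (w : ι → Rˣ) (σ : Equiv.Perm ι) : IsUnit (diagonal (fun i => (w i : R)) * σ.permMatrix R) :=
  .mul ((Pi.isUnit_iff.mpr fun i => (w i).isUnit).map (diagonalRingHom ι R))
    ⟨⟨σ.permMatrix R, σ⁻¹.permMatrix R,
      by rw [← permMatrix_mul, inv_mul_cancel, permMatrix_one],
      by rw [← permMatrix_mul, mul_inv_cancel, permMatrix_one]⟩, rfl⟩

end Matrix

theorem exists_perm_apply_eq_of_card_fiber_eq {ι X : Type} [Finite ι] (f : ι → X)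
    (τ : Equiv.Perm X) (h : ∀ x, Nat.card {i // f i = τ x} = Nat.card {i // f i = x}) :
    ∃ σ : Equiv.Perm ι, ∀ i, f (σ i) = τ (f i) := by
  have e : ∀ x, {i // τ (f i) = x} ≃ {i // f i = x} := fun x => by
    refine Classical.choice (Finite.card_eq.mp ?_)
    calc Nat.card {i // τ (f i) = x} = Nat.card {i // f i = τ.symm x} :=
          Nat.card_congr (Equiv.subtypeEquivRight fun _ => τ.eq_symm_apply.symm)
      _ = Nat.card {i // f i = x} := by rw [← h (τ.symm x), τ.apply_symm_apply]
  exact ⟨Equiv.ofFiberEquiv e, Equiv.ofFiberEquiv_map e⟩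

theorem forall_card_fiber_eq_iff {ι X : Type} [Finite ι] [Nonempty ι] (f : ι → X) :
    (∀ x y, Nat.card {i // f i = x} = Nat.card {i // f i = y}) ↔
      Function.Surjective f ∧ ∀ i j, Nat.card {l // f l = f i} = Nat.card {l // f l = f j} := by
  refine ⟨fun h => ⟨fun x => ?_, fun i j => h _ _⟩, fun ⟨hf, h⟩ x y => ?_⟩
  · obtain ⟨i⟩ := ‹Nonempty ι›
    have : Nonempty {l // f l = f i} := ⟨⟨i, rfl⟩⟩
    obtain ⟨⟨l, hl⟩⟩ := Finite.card_pos_iff.mp (h (f i) x ▸ Finite.card_pos)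
    exact ⟨l, hl⟩
  · obtain ⟨i, rfl⟩ := hf x
    obtain ⟨j, rfl⟩ := hf y
    exact h i j

theorem diagonal_mul_permMatrix_mem_matrixComponent (g : RingGrading Γ R) {n : ℕ}
    (γv : Fin n → Γ) {δ : Γ} (σ : Equiv.Perm (Fin n)) {w : Fin n → R}
    (hw : ∀ l, w l ∈ g.component ((γv l)⁻¹ * δ * γv (σ l))) :
    Matrix.diagonal w * σ.permMatrix R ∈ matrixComponent g n γv δ := by
  intro l m
  by_cases h : σ l = m
  · subst h
    simpa [Matrix.diagonal_mul] using hw l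
  · simp [Matrix.diagonal_mul, h, zero_mem]

namespace RingGrading

variable (g : RingGrading Γ R)

theorem mem_support_of_mem {γ : Γ} {a : R} (ha : a ∈ g.component γ) (h : a ≠ 0) :
    γ ∈ g.support :=
  fun hbot => h (by rwa [hbot, AddSubgroup.mem_bot] at ha)

def oneSubring : Subring R where
  carrier := g.component 1
  zero_mem' := zero_mem _
  add_mem' := add_mem
  neg_mem' := neg_mem
  one_mem' := g.one_mem
  mul_mem' ha hb := by simpa using g.mul_mem ha hb

section Projection

open DirectSum

variable [DecidableEq Γ]

theorem isInternal : IsInternal g.component :=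
  isInternal_submodule_of_iSupIndep_of_iSup_eq_top
    (A := fun γ => (g.component γ).toIntSubmodule)
    ((iSupIndep_map_orderIso_iff AddSubgroup.toIntSubmodule).mpr g.independent)
    (by rw [← AddSubgroup.toIntSubmodule.map_iSup, g.iSup_eq_top]; rfl)

noncomputable instance : Decomposition g.component :=
  g.isInternal.chooseDecomposition

noncomputable def proj (γ : Γ) : R →+ R where
  toFun x := decompose g.component x γ
  map_zero' := by simp
  map_add' x y := by simp

theorem proj_mem (γ : Γ) (x : R) : g.proj γ x ∈ g.component γ :=
  (decompose g.component x γ).2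

theorem proj_of_mem {γ : Γ} {x : R} (hx : x ∈ g.component γ) : g.proj γ x = x :=
  decompose_of_mem_same g.component hx

theorem proj_of_mem_of_ne {γ δ : Γ} {x : R} (hx : x ∈ g.component γ) (h : γ ≠ δ) :
    g.proj δ x = 0 :=
  decompose_of_mem_ne g.component hx h

variable {g}

theorem proj_mul_of_mem_left {α : Γ} {a : R} (ha : a ∈ g.component α) (β : Γ) (x : R) :
    g.proj (α * β) (a * x) = a * g.proj β x := by
  induction x using Decomposition.inductionOn g.component with
  | zero => simp
  | add x y hx hy => rw [mul_add, map_add, map_add, hx, hy, mul_add]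
  | @homogeneous γ x =>
    obtain rfl | hne := eq_or_ne γ β
    · rw [proj_of_mem _ (g.mul_mem ha x.2), proj_of_mem _ x.2]
    · have hne' : α * γ ≠ α * β := (mul_right_injective α).ne hne
      rw [proj_of_mem_of_ne _ (g.mul_mem ha x.2) hne', proj_of_mem_of_ne _ x.2 hne, mul_zero]

theorem proj_mul_of_mem_right {α : Γ} {a : R} (ha : a ∈ g.component α) (β : Γ) (x : R) :
    g.proj (β * α) (x * a) = g.proj β x * a := by
  induction x using Decomposition.inductionOn g.component with
  | zero => simp
  | add x y hx hy => rw [add_mul, map_add, map_add, hx, hy, add_mul]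
  | @homogeneous γ x =>
    obtain rfl | hne := eq_or_ne γ β
    · rw [proj_of_mem _ (g.mul_mem x.2 ha), proj_of_mem _ x.2]
    · have hne' : γ * α ≠ β * α := (mul_left_injective α).ne hne
      rw [proj_of_mem_of_ne _ (g.mul_mem x.2 ha) hne', proj_of_mem_of_ne _ x.2 hne, zero_mul]

theorem map_proj_one_mul_of_mem_one_left {I J : Type} [Fintype J] {A : Matrix I J R}
    {B : Matrix J I R} (hA : ∀ i j, A i j ∈ g.component 1) :
    (A * B).map (g.proj 1) = A * B.map (g.proj 1) := by
  ext i i'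
  simp only [Matrix.map_apply, Matrix.mul_apply, map_sum]
  exact Finset.sum_congr rfl fun j _ => by simpa using proj_mul_of_mem_left (hA i j) 1 (B j i')

theorem map_proj_one_mul_of_mem_one_right {I J : Type} [Fintype J] {A : Matrix J I R}
    {B : Matrix I J R} (hA : ∀ j i, A j i ∈ g.component 1) :
    (B * A).map (g.proj 1) = B.map (g.proj 1) * A := by
  ext i i'
  simp only [Matrix.map_apply, Matrix.mul_apply, map_sum]
  exact Finset.sum_congr rfl fun j _ => by simpa using proj_mul_of_mem_right (hA j i') 1 (B i j)

end Projection

variable {g} in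
theorem coe_inv_mem_of_coe_mem {γ : Γ} {u : Rˣ} (hu : (u : R) ∈ g.component γ) :
    ((u⁻¹ : Rˣ) : R) ∈ g.component γ⁻¹ := by
  classical
  -- `u` times the degree-`γ⁻¹` part of `u⁻¹` is the degree-`ε` part of `1`
  have h : (u : R) * g.proj γ⁻¹ ↑u⁻¹ = 1 := by
    rw [← proj_mul_of_mem_left hu, Units.mul_inv, mul_inv_cancel, g.proj_of_mem g.one_mem]
  rw [Units.inv_eq_of_mul_eq_one_right h]
  exact g.proj_mem _ _

end RingGrading

namespace GradedDivRing

variable {K : Type} [Ring K] (g : GradedDivRing Γ K)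

theorem exists_unit_mem_of_mem_support {γ : Γ} (hγ : γ ∈ g.support) :
    ∃ u : Kˣ, (u : K) ∈ g.component γ := by
  obtain ⟨⟨a, ha⟩, h⟩ := AddSubgroup.ne_bot_iff_exists_ne_zero.mp hγ
  exact ⟨(g.isUnit_of_homogeneous ha (by simpa using h)).unit, ha⟩

variable [Nontrivial K]

def supportSubgroup : Subgroup Γ where
  carrier := g.support
  one_mem' := g.mem_support_of_mem g.one_mem one_ne_zero
  mul_mem' hγ hδ := by
    obtain ⟨u, hu⟩ := g.exists_unit_mem_of_mem_support hγ
    obtain ⟨v, hv⟩ := g.exists_unit_mem_of_mem_support hδ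
    exact g.mem_support_of_mem (g.mul_mem hu hv) (u * v).ne_zero
  inv_mem' hγ := by
    obtain ⟨u, hu⟩ := g.exists_unit_mem_of_mem_support hγ
    exact g.mem_support_of_mem (RingGrading.coe_inv_mem_of_coe_mem hu) u⁻¹.ne_zero

noncomputable instance : DivisionRing g.oneSubring :=
  DivisionRing.ofIsUnitOrEqZero fun a => by
    refine or_iff_not_imp_right.mpr fun ha => ?_
    have hu := g.isUnit_of_homogeneous a.2 fun h => ha (Subtype.ext h)
    have hinv : ((hu.unit⁻¹ : Kˣ) : K) ∈ g.component 1 := by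
      simpa using RingGrading.coe_inv_mem_of_coe_mem (u := hu.unit) a.2
    exact ⟨⟨a, ⟨_, hinv⟩, Subtype.ext hu.mul_val_inv, Subtype.ext hu.val_inv_mul⟩, rfl⟩

section Blocks

variable {I J : Type} [Fintype I] [Fintype J] [DecidableEq I] [DecidableEq J]

theorem card_eq_of_mul_eq_one_of_mem_one {A : Matrix I J K} {B : Matrix J I K}
    (hA : ∀ i j, A i j ∈ g.component 1) (hAB : A * B = 1) (hBA : B * A = 1) :
    Fintype.card I = Fintype.card J := by
  classical
  have hproj_one : g.proj 1 1 = 1 := g.proj_of_mem g.one_mem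
  let A' : Matrix I J g.oneSubring := .of fun i j => ⟨A i j, hA i j⟩
  let B' : Matrix J I g.oneSubring := .of fun j i => ⟨g.proj 1 (B j i), g.proj_mem 1 _⟩
  have hinj {m n : Type} := Matrix.map_injective (m := m) (n := n)
    (f := (g.oneSubring.subtype : g.oneSubring → K)) Subtype.val_injective
  refine Matrix.card_eq_of_mul_eq_one (A := A') (B := B') (hinj ?_) (hinj ?_)
  · dsimp only
    rw [Matrix.map_mul, Matrix.map_one _ rfl rfl]
    change A * B.map (g.proj 1) = 1
    rw [← RingGrading.map_proj_one_mul_of_mem_one_left hA, hAB,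
      Matrix.map_one _ (map_zero _) hproj_one]
  · dsimp only
    rw [Matrix.map_mul, Matrix.map_one _ rfl rfl]
    change B.map (g.proj 1) * A = 1
    rw [← RingGrading.map_proj_one_mul_of_mem_one_right hA, hBA,
      Matrix.map_one _ (map_zero _) hproj_one]

open Matrix in
theorem card_eq_of_mul_eq_one_of_mem {A : Matrix I J K} {B : Matrix J I K} {a : I → Γ}
    {b : J → Γ} (ha : ∀ i, a i ∈ g.supportSubgroup) (hb : ∀ j, b j ∈ g.supportSubgroup)
    (hA : ∀ i j, A i j ∈ g.component (a i * b j)) (hAB : A * B = 1) (hBA : B * A = 1) :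
    Fintype.card I = Fintype.card J := by
  choose c hc using fun i => g.exists_unit_mem_of_mem_support (inv_mem (ha i))
  choose d hd using fun j => g.exists_unit_mem_of_mem_support (inv_mem (hb j))
  have hunits {ι : Type} [Fintype ι] [DecidableEq ι] (u : ι → Kˣ) :
      diagonal (fun i => (u i : K)) * diagonal (fun i => (↑(u i)⁻¹ : K)) = 1 ∧
      diagonal (fun i => (↑(u i)⁻¹ : K)) * diagonal (fun i => (u i : K)) = 1 := by
    simp
  obtain ⟨hc₁, hc₂⟩ := hunits c
  obtain ⟨hd₁, hd₂⟩ := hunits d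
  refine g.card_eq_of_mul_eq_one_of_mem_one
    (A := diagonal (fun i => (c i : K)) * A * diagonal (fun j => (d j : K)))
    (B := diagonal (fun j => (↑(d j)⁻¹ : K)) * B * diagonal (fun i => (↑(c i)⁻¹ : K)))
    (fun i j => ?_) ?_ ?_
  · simpa [diagonal_mul, mul_diagonal] using g.mul_mem (g.mul_mem (hc i) (hA i j)) (hd j)
  · simp only [Matrix.mul_assoc]
    rw [← Matrix.mul_assoc (diagonal _) (diagonal _), hd₁, Matrix.one_mul,
      ← Matrix.mul_assoc A, hAB, Matrix.one_mul, hc₁]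
  · simp only [Matrix.mul_assoc]
    rw [← Matrix.mul_assoc (diagonal _) (diagonal _), hc₂, Matrix.one_mul,
      ← Matrix.mul_assoc B, hBA, Matrix.one_mul, hd₂]

end Blocks

section Cosets

variable {n : ℕ} (γv : Fin n → Γ)

local notation "coset" l => ((γv l : Γ) : Γ ⧸ supportSubgroup g)

variable {g γv}

theorem mk_eq_smul_mk_of_ne_zero {δ : Γ} {U : Matrix (Fin n) (Fin n) K}
    (hU : U ∈ matrixComponent g.toRingGrading n γv δ) {l m : Fin n} (h : U l m ≠ 0) :
    (coset l) = δ • (coset m) := by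
  rw [MulAction.Quotient.smul_mk, smul_eq_mul, QuotientGroup.eq, ← mul_assoc]
  exact g.mem_support_of_mem (hU l m) h

theorem card_fiber_smul_eq {δ : Γ} {U : (Matrix (Fin n) (Fin n) K)ˣ}
    (hU : (U : Matrix (Fin n) (Fin n) K) ∈ matrixComponent g.toRingGrading n γv δ)
    (x : Γ ⧸ g.supportSubgroup) :
    Nat.card {l // (coset l) = δ • x} = Nat.card {l // (coset l) = x} := by
  classical
  obtain ⟨ρ, rfl⟩ := QuotientGroup.mk_surjective x
  have hblock : ∀ l m, U.1 l m ≠ 0 →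
      ((coset l) = δ • (ρ : Γ ⧸ g.supportSubgroup) ↔ (coset m) = ρ) :=
    fun l m h => by rw [mk_eq_smul_mk_of_ne_zero hU h, smul_left_cancel_iff]
  rw [Nat.card_eq_fintype_card, Nat.card_eq_fintype_card]
  refine g.card_eq_of_mul_eq_one_of_mem (A := U.1.submatrix Subtype.val Subtype.val)
    (B := U⁻¹.1.submatrix Subtype.val Subtype.val) (a := fun l => (γv l)⁻¹ * (δ * ρ))
    (b := fun m => ρ⁻¹ * γv m) (fun l => ?_) (fun m => ?_) (fun l m => ?_) ?_ ?_
  · exact QuotientGroup.eq.mp l.2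
  · exact QuotientGroup.eq.mp m.2.symm
  · change U.1 l m ∈ _
    simpa [mul_assoc] using hU l m
  · rw [Matrix.submatrix_mul_submatrix_subtype, U.mul_inv,
      Matrix.submatrix_one _ Subtype.val_injective]
    intro l l' m hm
    rw [not_ne_iff.mp (mt (fun h => (hblock _ _ h).mp l.2) hm), zero_mul]
  · rw [Matrix.submatrix_mul_submatrix_subtype, U.inv_mul,
      Matrix.submatrix_one _ Subtype.val_injective]
    intro m m' l hl
    rw [not_ne_iff.mp (mt (fun h => (hblock _ _ h).mpr m'.2) hl), mul_zero]

variable (g γv)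

theorem card_fiber_eq_of_isCrossedProduct
    (h : IsCrossedProduct (matrixComponent g.toRingGrading n γv)) (x y : Γ ⧸ g.supportSubgroup) :
    Nat.card {l // (coset l) = x} = Nat.card {l // (coset l) = y} := by
  obtain ⟨δ, rfl⟩ := MulAction.exists_smul_eq Γ x y
  obtain ⟨U, hU⟩ := h δ
  exact (card_fiber_smul_eq hU x).symm

theorem isCrossedProduct_of_card_fiber_eq
    (h : ∀ x y : Γ ⧸ g.supportSubgroup,
      Nat.card {l // (coset l) = x} = Nat.card {l // (coset l) = y}) :
    IsCrossedProduct (matrixComponent g.toRingGrading n γv) := by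
  intro δ
  obtain ⟨σ, hσ⟩ := exists_perm_apply_eq_of_card_fiber_eq (fun l => coset l)
    (MulAction.toPerm δ⁻¹) fun _ => h _ _
  have hdeg : ∀ l, (γv l)⁻¹ * δ * γv (σ l) ∈ g.supportSubgroup := fun l => by
    have := congrArg (δ • ·) (hσ l)
    simp only [MulAction.toPerm_apply, smul_inv_smul] at this
    rw [mul_assoc, ← QuotientGroup.eq, ← smul_eq_mul, ← MulAction.Quotient.smul_mk, this]
  choose w hw using fun l => g.exists_unit_mem_of_mem_support (hdeg l)
  exact ⟨(Matrix.isUnit_diagonal_mul_permMatrix w σ).unit,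
    diagonal_mul_permMatrix_mem_matrixComponent _ γv σ hw⟩

end Cosets

end GradedDivRing

/-- For a `Γ`-graded division ring `K` with support `Γ_K` and
`R = Mₙ(K)(γ₁, …, γₙ)`, the ring `R` is a crossed product iff the cosets
`γ₁Γ_K, …, γₙΓ_K` exhaust `Γ/Γ_K` and every coset occurs the same number of times in
this list (note `γ_lΓ_K = γᵢΓ_K ↔ γᵢ⁻¹γ_l ∈ Γ_K`). -/
theorem matrix_crossedProduct_iff_cosets_and_multiplicities {Γ : Type} [Group Γ]
    {K : Type} [Ring K] [Nontrivial K] (g : GradedDivRing Γ K) {n : ℕ} (hn : 0 < n)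
    (γv : Fin n → Γ) :
    IsCrossedProduct (matrixComponent g.toRingGrading n γv) ↔
      ((∀ δ : Γ, ∃ i : Fin n, (γv i)⁻¹ * δ ∈ g.toRingGrading.support) ∧
        ∀ i j : Fin n,
          {l : Fin n | (γv i)⁻¹ * γv l ∈ g.toRingGrading.support}.ncard =
          {l : Fin n | (γv j)⁻¹ * γv l ∈ g.toRingGrading.support}.ncard) := by
  let f (l : Fin n) : Γ ⧸ g.supportSubgroup := γv l
  have hsurj : Function.Surjective f ↔ ∀ δ : Γ, ∃ i, (γv i)⁻¹ * δ ∈ g.support :=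
    QuotientGroup.mk_surjective.forall.trans <| forall_congr' fun _ =>
      exists_congr fun _ => QuotientGroup.eq
  have hfiber (i : Fin n) :
      Nat.card {l // f l = f i} = {l | (γv i)⁻¹ * γv l ∈ g.support}.ncard := by
    rw [← Nat.card_coe_set_eq]
    exact Nat.card_congr (Equiv.subtypeEquivRight fun _ => eq_comm.trans QuotientGroup.eq)
  have : Nonempty (Fin n) := ⟨⟨0, hn⟩⟩
  simp only [← hsurj, ← hfiber, ← forall_card_fiber_eq_iff f]
  exact ⟨g.card_fiber_eq_of_isCrossedProduct γv, g.isCrossedProduct_of_card_fiber_eq γv⟩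
end

section
/- Let K be a field, m and n positive integers, and γ₁,…,γₙ integers. Then the ℤ-graded ring R = Mₙ(K[x^m, x^{−m}])(γ₁,…,γₙ) is a group ring over its degree-zero component if and only if m = 1; and in that case R is graded isomorphic to Mₙ(K[x, x^{−1}])(0, 0, …, 0). -/
open Pointwise

noncomputable section

def matrixComponentZ {R : Type} [Ring R] (c : ℤ → AddSubgroup R) (n : ℕ)
    (γv : Fin n → ℤ) (δ : ℤ) : AddSubgroup (Matrix (Fin n) (Fin n) R) where
  carrier := {M | ∀ i j, M i j ∈ c (-(γv i) + δ + γv j)}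
  add_mem' := by
    intro a b ha hb i j
    simpa [Matrix.add_apply] using add_mem (ha i j) (hb i j)
  zero_mem' := by
    intro i j
    simpa using zero_mem (c (-(γv i) + δ + γv j))
  neg_mem' := by
    intro a ha i j
    simpa [Matrix.neg_apply] using neg_mem (ha i j)

/-- The graded field `K[x^m, x^{-m}]`, realized as the Laurent polynomial ring
`AddMonoidAlgebra K ℤ` in which the basis element `single k` stands for `x^{m k}`.
Its degree-`d` component is `K·x^d` if `m ∣ d` (i.e. `d = m k`) and `0` otherwise. -/
def laurentComponent (K : Type) [Field K] (m : ℕ) (d : ℤ) :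
    AddSubgroup (AddMonoidAlgebra K ℤ) where
  carrier := {f | ∀ k : ℤ, (m : ℤ) * k ≠ d → f.coeff k = 0}
  add_mem' := by
    intro f h hf hh k hk
    show (f + h).coeff k = 0
    rw [AddMonoidAlgebra.coeff_add, Finsupp.add_apply, hf k hk, hh k hk, add_zero]
  zero_mem' := fun k _ => rfl
  neg_mem' := by
    intro f hf k hk
    show (-f).coeff k = 0
    rw [AddMonoidAlgebra.coeff_neg, Finsupp.neg_apply, hf k hk, neg_zero]

theorem laurentComponent_mul {K : Type} [Field K] {m : ℕ} {a b : ℤ}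
    {f g : AddMonoidAlgebra K ℤ} (hf : f ∈ laurentComponent K m a)
    (hg : g ∈ laurentComponent K m b) : f * g ∈ laurentComponent K m (a + b) := by
  intro k hk
  by_contra hne
  have hks : k ∈ (f * g).coeff.support := Finsupp.mem_support_iff.mpr hne
  have hmem := AddMonoidAlgebra.support_coeff_mul_subset f g hks
  rw [Finset.mem_add] at hmem
  obtain ⟨k₁, hk₁, k₂, hk₂, hsum⟩ := hmem
  have h1 : (m : ℤ) * k₁ = a := by
    by_contra h
    exact (Finsupp.mem_support_iff.mp hk₁) (hf k₁ h)
  have h2 : (m : ℤ) * k₂ = b := by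
    by_contra h
    exact (Finsupp.mem_support_iff.mp hk₂) (hg k₂ h)
  exact hk (by rw [← hsum, mul_add, h1, h2])

def StronglyGradedZ {S : Type} [Ring S] (c : ℤ → AddSubgroup S) : Prop :=
  ∀ a b : ℤ, c (a + b) ≤ AddSubgroup.closure ((c a : Set S) * (c b : Set S))

def IsCrossedProductZ {S : Type} [Ring S] (c : ℤ → AddSubgroup S) : Prop :=
  ∀ d : ℤ, ∃ u : Sˣ, (u : S) ∈ c d

def IsSkewGroupRingZ {S : Type} [Ring S] (c : ℤ → AddSubgroup S) : Prop :=
  ∃ σ : ℤ → Sˣ, (∀ a b : ℤ, σ (a + b) = σ a * σ b) ∧ ∀ d : ℤ, ((σ d : Sˣ) : S) ∈ c d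

/-- The degree-zero component of `Mₙ(K[x^m, x^{-m}])(γ₁, …, γₙ)`, as a subring. -/
def laurentMatrixZeroSubring (K : Type) [Field K] (m n : ℕ) (γv : Fin n → ℤ) :
    Subring (Matrix (Fin n) (Fin n) (AddMonoidAlgebra K ℤ)) where
  carrier := matrixComponentZ (laurentComponent K m) n γv 0
  add_mem' := add_mem
  zero_mem' := zero_mem _
  neg_mem' := neg_mem
  one_mem' := by
    intro i j
    by_cases h : i = j
    · subst h
      rw [Matrix.one_apply_eq]
      have hh : -(γv i) + 0 + γv i = 0 := by ring
      rw [hh]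
      intro k hk
      have hk0 : k ≠ 0 := by
        intro h0; exact hk (by rw [h0, mul_zero])
      show ((AddMonoidAlgebra.single (0 : ℤ) (1 : K))).coeff k = 0
      first
        | exact Finsupp.single_eq_of_ne (Ne.symm hk0)
        | exact Finsupp.single_eq_of_ne hk0
    · rw [Matrix.one_apply_ne h]
      exact zero_mem _
  mul_mem' := by
    intro a b ha hb i j
    show (a * b) i j ∈ _
    rw [Matrix.mul_apply]
    refine AddSubgroup.sum_mem _ fun k _ => ?_
    have h := laurentComponent_mul (ha i k) (hb k j)
    have hh : -(γv i) + 0 + γv k + (-(γv k) + 0 + γv j) = -(γv i) + 0 + γv j := by ring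
    rwa [hh] at h

/-- The degree-`d` component `A·d` of the group ring `A[ℤ]`. -/
def addMonoidAlgebraComponentZ (A : Type) [Ring A] (d : ℤ) :
    AddSubgroup (AddMonoidAlgebra A ℤ) where
  carrier := {f | ∀ k : ℤ, k ≠ d → f.coeff k = 0}
  add_mem' := by
    intro f h hf hh k hk
    show (f + h).coeff k = 0
    rw [AddMonoidAlgebra.coeff_add, Finsupp.add_apply, hf k hk, hh k hk, add_zero]
  zero_mem' := fun k _ => rfl
  neg_mem' := by
    intro f hf k hk
    show (-f).coeff k = 0
    rw [AddMonoidAlgebra.coeff_neg, Finsupp.neg_apply, hf k hk, neg_zero]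


/-! If `R ≅ R₀[ℤ]` as graded rings, the image of the generator `X` of `R₀[ℤ]` is a unit of `R`
of degree `1` commuting with `R₀`, in particular with the diagonal idempotents `e_ii`. So it is a
diagonal matrix whose entries lie in `K[x^m, x^{-m}]_1`, which is zero unless `m = 1`.

Conversely, when `m = 1` the scalar matrices `x^d • 1` form a multiplicative family of units,
one of each degree, commuting with `R₀`; since the components of `R` are independent and span
`R`, this gives `R ≅ R₀[ℤ]`, `∑ a_d X^d ↦ ∑ a_d x^d`. Conjugating by
`diag(x^{γ₁}, …, x^{γₙ})` removes the shifts. -/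

theorem mul_mem_graded_of_add_eq {ι R S : Type} [AddMonoid ι] [Mul R] [SetLike S R]
    {c : ι → S} [SetLike.GradedMul c] {a b d : ι} {x y : R} (hx : x ∈ c a) (hy : y ∈ c b)
    (h : a + b = d) : x * y ∈ c d :=
  h ▸ SetLike.mul_mem_graded hx hy

theorem iSupIndep_of_projections {ι G : Type} [AddGroup G] {c : ι → AddSubgroup G}
    (π : ι → G →+ G) (hself : ∀ i, ∀ x ∈ c i, π i x = x)
    (hne : ∀ i j, i ≠ j → ∀ x ∈ c j, π i x = 0) : iSupIndep c := by
  intro i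
  rw [AddSubgroup.disjoint_def]
  intro x hxi hx
  have hker : ⨆ (j) (_ : j ≠ i), c j ≤ (π i).ker :=
    iSup₂_le fun j hj y hy => hne i j (Ne.symm hj) y hy
  rw [← hself i x hxi]
  exact hker hx

section Laurent

variable {K : Type} [Field K] {m : ℕ}

open AddMonoidAlgebra

theorem single_mem_laurentComponent {k d : ℤ} (a : K) (h : (m : ℤ) * k = d) :
    single k a ∈ laurentComponent K m d := fun _ hk =>
  Finsupp.single_eq_of_ne' fun hkk => hk (hkk ▸ h)

theorem one_mem_laurentComponent : (1 : AddMonoidAlgebra K ℤ) ∈ laurentComponent K m 0 :=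
  single_mem_laurentComponent 1 (mul_zero _)

theorem eq_zero_of_mem_laurentComponent {d : ℤ} (hd : ¬ (m : ℤ) ∣ d)
    {f : AddMonoidAlgebra K ℤ} (hf : f ∈ laurentComponent K m d) : f = 0 :=
  coeff_inj.mp <| Finsupp.ext fun k => hf k fun h => hd ⟨k, h.symm⟩

instance : SetLike.GradedMul (laurentComponent K m) :=
  ⟨fun _ _ _ _ => laurentComponent_mul⟩

theorem laurentComponent_iSup_eq_top : ⨆ d, laurentComponent K m d = ⊤ := by
  rw [eq_top_iff]
  rintro f -
  induction f using AddMonoidAlgebra.induction_linear with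
  | zero => exact zero_mem _
  | add f g hf hg => exact add_mem hf hg
  | single k a => exact AddSubgroup.mem_iSup_of_mem _ (single_mem_laurentComponent a rfl)

def laurentProjection (K : Type) [Field K] (m : ℕ) (d : ℤ) :
    AddMonoidAlgebra K ℤ →+ AddMonoidAlgebra K ℤ :=
  AddMonoidHom.mk' (fun f => ofCoeff (f.coeff.filter fun k => (m : ℤ) * k = d))
    fun f g => by simp [Finsupp.filter_add]

theorem laurentComponent_iSupIndep : iSupIndep (laurentComponent K m) := by
  refine iSupIndep_of_projections (laurentProjection K m) (fun d f hf => ?_)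
    fun d e hde f hf => ?_
  · exact coeff_inj.mp <| (Finsupp.filter_eq_self_iff _ _).mpr fun k hk =>
      by_contra fun h => hk (hf k h)
  · exact coeff_inj.mp <| (Finsupp.filter_eq_zero_iff _ _).mpr fun k hk =>
      hf k fun h => hde (hk ▸ h)

end Laurent

section MatrixGrading

variable {R : Type} [Ring R] {c : ℤ → AddSubgroup R} {n : ℕ} {γv : Fin n → ℤ}

open Matrix

theorem single_mem_matrixComponentZ {i j : Fin n} {d : ℤ} {a : R}
    (ha : a ∈ c (-(γv i) + d + γv j)) : single i j a ∈ matrixComponentZ c n γv d := by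
  intro k l
  by_cases h : i = k ∧ j = l
  · obtain ⟨rfl, rfl⟩ := h
    simpa using ha
  · rw [single_apply_of_ne _ _ _ _ _ h]
    exact zero_mem _

theorem diagonal_mem_matrixComponentZ {d : ℤ} {a : Fin n → R} (ha : ∀ i, a i ∈ c d) :
    diagonal a ∈ matrixComponentZ c n γv d := by
  intro i j
  by_cases h : i = j
  · subst h
    simpa using ha i
  · rw [diagonal_apply_ne _ h]
    exact zero_mem _

instance [SetLike.GradedMul c] : SetLike.GradedMul (matrixComponentZ c n γv) where
  mul_mem a b _ _ hx hy i j := by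
    rw [mul_apply]
    exact sum_mem fun k _ => mul_mem_graded_of_add_eq (hx i k) (hy k j) (by ring)

theorem matrixComponentZ_iSupIndep (h : iSupIndep c) : iSupIndep (matrixComponentZ c n γv) := by
  intro d
  rw [AddSubgroup.disjoint_def]
  intro x hxd hx
  ext i j
  set e := -(γv i) + d + γv j
  have hle : ⨆ (d') (_ : d' ≠ d), matrixComponentZ c n γv d' ≤
      (⨆ (e') (_ : e' ≠ e), c e').comap (entryAddMonoidHom R i j) :=
    iSup₂_le fun d' hd' y hy =>
      le_iSup₂ (f := fun e' (_ : e' ≠ e) => c e') _ (by omega) (hy i j)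
  exact AddSubgroup.disjoint_def.mp (h e) (hxd i j) (hle hx)

theorem matrixComponentZ_iSup_eq_top (h : ⨆ d, c d = ⊤) :
    ⨆ d, matrixComponentZ c n γv d = ⊤ := by
  rw [eq_top_iff]
  rintro x -
  rw [matrix_eq_sum_single x]
  refine sum_mem fun i _ => sum_mem fun j _ => ?_
  refine AddSubgroup.iSup_induction c (C := fun a => single i j a ∈ _)
    (h ▸ AddSubgroup.mem_top (x i j)) (fun e a ha => ?_) (by simp) fun a b ha hb => ?_
  · exact AddSubgroup.mem_iSup_of_mem (γv i + e - γv j)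
      (single_mem_matrixComponentZ (by convert ha using 2; ring))
  · simpa [single_add] using add_mem ha hb

end MatrixGrading

section MatrixShift

variable {R : Type} [Ring R] {c : ℤ → AddSubgroup R} [SetLike.GradedMul c] {n : ℕ}
  {γv : Fin n → ℤ}

open Matrix

theorem isGradedIso_matrixComponentZ_zero (a : Fin n → Rˣ) (ha : ∀ i, (a i : R) ∈ c (γv i))
    (ha' : ∀ i, (↑(a i)⁻¹ : R) ∈ c (-γv i)) :
    IsGradedIso (matrixComponentZ c n γv) (matrixComponentZ c n fun _ => 0) := by
  let D : (Matrix (Fin n) (Fin n) R)ˣ :=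
    ⟨diagonal fun i => a i, diagonal fun i => ↑(a i)⁻¹, by simp, by simp⟩
  refine ⟨MulSemiringAction.toRingEquiv (ConjAct _) _ (ConjAct.toConjAct D), fun δ x => ?_⟩
  have hentry : ∀ i j, (ConjAct.toConjAct D • x) i j = a i * x i j * ↑(a j)⁻¹ := by
    simp [ConjAct.units_smul_def, D, diagonal_mul, mul_diagonal]
  show _ ↔ ∀ i j, (ConjAct.toConjAct D • x) i j ∈ _
  simp only [hentry]
  constructor
  · intro hx i j
    exact mul_mem_graded_of_add_eq (mul_mem_graded_of_add_eq (ha i) (hx i j) rfl) (ha' j)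
      (by ring)
  · intro hx i j
    have hx' := mul_mem_graded_of_add_eq (mul_mem_graded_of_add_eq (ha' i) (hx i j) rfl) (ha j)
      (d := -(γv i) + δ + γv j) (by ring)
    simpa [mul_assoc] using hx'

end MatrixShift

section GroupRing

variable {S A : Type} [Ring S] [Ring A] {c : ℤ → AddSubgroup S}

open AddMonoidAlgebra

theorem single_mem_addMonoidAlgebraComponentZ (d : ℤ) (a : A) :
    single d a ∈ addMonoidAlgebraComponentZ A d :=
  fun _ hk => Finsupp.single_eq_of_ne' hk.symm

theorem eq_single_of_mem_addMonoidAlgebraComponentZ {d : ℤ} {f : AddMonoidAlgebra A ℤ}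
    (hf : f ∈ addMonoidAlgebraComponentZ A d) : f = single d (f.coeff d) := by
  ext k
  by_cases h : k = d
  · rw [h, coeff_single, Finsupp.single_eq_same]
  · rw [hf k h, coeff_single, Finsupp.single_eq_of_ne' (Ne.symm h)]

theorem IsGradedIso.exists_unit_mem_one_commute
    (h : IsGradedIso c (addMonoidAlgebraComponentZ A)) :
    ∃ u : Sˣ, (u : S) ∈ c 1 ∧ ∀ x ∈ c 0, Commute x u := by
  obtain ⟨e, he⟩ := h
  let X : (AddMonoidAlgebra A ℤ)ˣ := Units.map (of A ℤ) (toUnits (Multiplicative.ofAdd 1))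
  refine ⟨Units.map e.symm.toMonoidHom X, (he 1 _).mpr ?_, fun y hy => ?_⟩
  · simpa [X] using single_mem_addMonoidAlgebraComponentZ 1 (1 : A)
  · have hXy : Commute (e y) (single 1 1) := by
      rw [eq_single_of_mem_addMonoidAlgebraComponentZ ((he 0 y).mp hy)]
      simp [Commute, SemiconjBy]
    simpa [X] using hXy.map e.symm

variable (S₀ : Subring S) (t : Multiplicative ℤ →* S)
  (hcomm : ∀ (x : S₀) d, Commute (x : S) (t d))

def groupRingLift : AddMonoidAlgebra S₀ ℤ →+* S :=
  liftNCRingHom S₀.subtype t hcomm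

theorem groupRingLift_single (d : ℤ) (a : S₀) :
    groupRingLift S₀ t hcomm (single d a) = a * t (Multiplicative.ofAdd d) :=
  liftNC_single _ _ _ _

theorem groupRingLift_eq_sum (F : AddMonoidAlgebra S₀ ℤ) :
    groupRingLift S₀ t hcomm F =
      ∑ d ∈ F.coeff.support, groupRingLift S₀ t hcomm (single d (F.coeff d)) := by
  conv_lhs => rw [← sum_coeff_single F, Finsupp.sum, map_sum]

variable [SetLike.GradedMul c] {S₀ t} (hS₀ : ∀ x, x ∈ S₀ ↔ x ∈ c 0)
  (ht : ∀ d, t (Multiplicative.ofAdd d) ∈ c d)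
include hS₀ ht

theorem groupRingLift_single_mem (d : ℤ) (a : S₀) :
    groupRingLift S₀ t hcomm (single d a) ∈ c d := by
  rw [groupRingLift_single]
  exact mul_mem_graded_of_add_eq ((hS₀ a).mp a.2) (ht d) (zero_add d)

theorem coeff_eq_zero_of_groupRingLift_mem (hind : iSupIndep c) {F : AddMonoidAlgebra S₀ ℤ}
    {δ : ℤ} (hF : groupRingLift S₀ t hcomm F ∈ c δ) {d : ℤ} (hd : d ≠ δ) : F.coeff d = 0 := by
  set y := fun e => groupRingLift S₀ t hcomm (single e (F.coeff e))
  have hyd : y d = 0 := by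
    by_cases hds : d ∈ F.coeff.support
    · have hsplit :
          y d = groupRingLift S₀ t hcomm F - ∑ e ∈ F.coeff.support.erase d, y e := by
        rw [groupRingLift_eq_sum, ← Finset.add_sum_erase _ _ hds, add_sub_cancel_right]
      refine AddSubgroup.disjoint_def.mp (hind d)
        (groupRingLift_single_mem hcomm hS₀ ht _ _) ?_
      rw [hsplit]
      exact sub_mem (le_iSup₂ (f := fun e (_ : e ≠ d) => c e) δ hd.symm hF)
        (sum_mem fun e he => le_iSup₂ (f := fun e (_ : e ≠ d) => c e) e
          (Finset.ne_of_mem_erase he) (groupRingLift_single_mem hcomm hS₀ ht _ _))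
    · simp [y, Finsupp.notMem_support_iff.mp hds]
  have hcoeff : (F.coeff d : S) = y d * t (Multiplicative.ofAdd (-d)) := by
    rw [show y d = _ from groupRingLift_single .., mul_assoc, ← map_mul, ← ofAdd_add,
      add_neg_cancel, ofAdd_zero, map_one, mul_one]
  rw [hyd, zero_mul] at hcoeff
  exact_mod_cast hcoeff

theorem groupRingLift_mem_iff (hind : iSupIndep c) (F : AddMonoidAlgebra S₀ ℤ) (δ : ℤ) :
    groupRingLift S₀ t hcomm F ∈ c δ ↔ F ∈ addMonoidAlgebraComponentZ S₀ δ := by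
  refine ⟨fun hF d hd => coeff_eq_zero_of_groupRingLift_mem hcomm hS₀ ht hind hF hd,
    fun hF => ?_⟩
  rw [eq_single_of_mem_addMonoidAlgebraComponentZ hF]
  exact groupRingLift_single_mem hcomm hS₀ ht _ _

theorem groupRingLift_injective (hind : iSupIndep c) :
    Function.Injective (groupRingLift S₀ t hcomm) := by
  refine (injective_iff_map_eq_zero _).mpr fun F hF => ?_
  refine coeff_inj.mp (Finsupp.ext fun d => ?_)
  have hF' : F ∈ addMonoidAlgebraComponentZ S₀ (d + 1) :=
    (groupRingLift_mem_iff hcomm hS₀ ht hind F _).mp (hF ▸ zero_mem _)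
  exact hF' d (by omega)

theorem groupRingLift_surjective (hspan : ⨆ d, c d = ⊤) :
    Function.Surjective (groupRingLift S₀ t hcomm) := by
  intro x
  refine AddSubgroup.iSup_induction c (C := fun x => ∃ F, groupRingLift S₀ t hcomm F = x)
    (hspan ▸ AddSubgroup.mem_top x) (fun d x hx => ?_) ⟨0, map_zero _⟩
    fun _ _ ⟨F, hF⟩ ⟨G, hG⟩ => ⟨F + G, by rw [map_add, hF, hG]⟩
  have hx₀ : x * t (Multiplicative.ofAdd (-d)) ∈ S₀ :=
    (hS₀ _).mpr (mul_mem_graded_of_add_eq hx (ht _) (add_neg_cancel d))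
  refine ⟨single d ⟨_, hx₀⟩, ?_⟩
  rw [groupRingLift_single]
  change x * _ * _ = x
  rw [mul_assoc, ← map_mul, ← ofAdd_add, neg_add_cancel, ofAdd_zero, map_one, mul_one]

include hcomm in
theorem isGradedIso_addMonoidAlgebraComponentZ (hind : iSupIndep c) (hspan : ⨆ d, c d = ⊤) :
    IsGradedIso c (addMonoidAlgebraComponentZ S₀) := by
  let e := RingEquiv.ofBijective (groupRingLift S₀ t hcomm)
    ⟨groupRingLift_injective hcomm hS₀ ht hind, groupRingLift_surjective hcomm hS₀ ht hspan⟩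
  refine ⟨e.symm, fun δ x => ?_⟩
  conv_lhs => rw [← e.apply_symm_apply x]
  exact groupRingLift_mem_iff hcomm hS₀ ht hind _ δ

end GroupRing

section LaurentMatrix

variable {K : Type} [Field K] {m n : ℕ} {γv : Fin n → ℤ}

open Matrix AddMonoidAlgebra

theorem single_one_mem_laurentMatrixZero (i : Fin n) :
    single i i 1 ∈ matrixComponentZ (laurentComponent K m) n γv 0 :=
  single_mem_matrixComponentZ (by simpa using one_mem_laurentComponent)

theorem eq_zero_of_mem_one_of_commute_single (hm : m ≠ 1)
    {u : Matrix (Fin n) (Fin n) (AddMonoidAlgebra K ℤ)}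
    (hu : u ∈ matrixComponentZ (laurentComponent K m) n γv 1)
    (hcomm : ∀ i, Commute (single i i 1) u) : u = 0 := by
  have hm' : ¬ (m : ℤ) ∣ 1 := by exact_mod_cast Nat.dvd_one.not.mpr hm
  ext1 k i
  by_cases hki : k = i
  · subst hki
    exact eq_zero_of_mem_laurentComponent hm' (by simpa using hu k k)
  · exact col_eq_zero_of_commute_single (hcomm i) hki

theorem eq_one_of_isGradedIso_addMonoidAlgebraComponentZ {A : Type} [Ring A] (hn : 0 < n)
    (h : IsGradedIso (matrixComponentZ (laurentComponent K m) n γv)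
      (addMonoidAlgebraComponentZ A)) : m = 1 := by
  obtain ⟨u, hu, hcomm⟩ := h.exists_unit_mem_one_commute
  by_contra hm
  have : Nonempty (Fin n) := ⟨⟨0, hn⟩⟩
  exact u.ne_zero <| eq_zero_of_mem_one_of_commute_single hm hu fun i =>
    hcomm _ (single_one_mem_laurentMatrixZero i)

theorem isGradedIso_laurentMatrix_addMonoidAlgebraComponentZ :
    IsGradedIso (matrixComponentZ (laurentComponent K 1) n γv)
      (addMonoidAlgebraComponentZ (laurentMatrixZeroSubring K 1 n γv)) :=
  isGradedIso_addMonoidAlgebraComponentZ (t := (scalar (Fin n)).toMonoidHom.comp (of K ℤ))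
    (fun _ _ => (scalar_commute _ (fun _ => Commute.all _ _) _).symm) (fun _ => Iff.rfl)
    (fun _ => diagonal_mem_matrixComponentZ fun _ => single_mem_laurentComponent 1 (by simp))
    (matrixComponentZ_iSupIndep laurentComponent_iSupIndep)
    (matrixComponentZ_iSup_eq_top laurentComponent_iSup_eq_top)

theorem isGradedIso_laurentMatrix_zero_shift :
    IsGradedIso (matrixComponentZ (laurentComponent K 1) n γv)
      (matrixComponentZ (laurentComponent K 1) n fun _ => 0) :=
  isGradedIso_matrixComponentZ_zero (fun i => Units.map (of K ℤ) (toUnits (.ofAdd (γv i))))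
    (fun _ => by simpa using single_mem_laurentComponent (1 : K) (one_mul _))
    (fun _ => by simpa using single_mem_laurentComponent (1 : K) (one_mul _))

end LaurentMatrix

theorem laurentMatrix_groupRing_iff_general (K : Type) [Field K] (m n : ℕ)
    (hn : 0 < n) (γv : Fin n → ℤ) :
    (IsGradedIso (matrixComponentZ (laurentComponent K m) n γv)
        (addMonoidAlgebraComponentZ (laurentMatrixZeroSubring K m n γv)) ↔ m = 1) ∧
    (m = 1 → IsGradedIso (matrixComponentZ (laurentComponent K m) n γv)
        (matrixComponentZ (laurentComponent K 1) n fun _ => (0 : ℤ))) := by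
  refine ⟨⟨eq_one_of_isGradedIso_addMonoidAlgebraComponentZ hn, ?_⟩, ?_⟩ <;> rintro rfl
  · exact isGradedIso_laurentMatrix_addMonoidAlgebraComponentZ
  · exact isGradedIso_laurentMatrix_zero_shift

/-- `R = Mₙ(K[x^m, x^{-m}])(γ₁, …, γₙ)` is a group ring over its
degree-zero component `R₀` (i.e. graded isomorphic to `R₀[ℤ]` with its natural grading)
iff `m = 1`, and in that case `R ≅_gr Mₙ(K[x, x⁻¹])(0, …, 0)`. -/
theorem laurentMatrix_groupRing_iff (K : Type) [Field K] (m n : ℕ) (hm : 0 < m)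
    (hn : 0 < n) (γv : Fin n → ℤ) :
    (IsGradedIso (matrixComponentZ (laurentComponent K m) n γv)
        (addMonoidAlgebraComponentZ (laurentMatrixZeroSubring K m n γv)) ↔ m = 1) ∧
    (m = 1 → IsGradedIso (matrixComponentZ (laurentComponent K m) n γv)
        (matrixComponentZ (laurentComponent K 1) n fun _ => (0 : ℤ))) :=
  laurentMatrix_groupRing_iff_general K m n hn γv
end
end
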